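/- Let H be a Hardy field containing ℒℰ, let f ∈ H be strongly non-polynomial with log t ≺ f(t), and let k be a natural number large enough that f^{(k+1)}(t) → 0 as t → +∞. Let L be a positive function with |f^{(k)}(t)|^{-1/k} ≺ L(t) ≺ |f^{(k+1)}(t)|^{-1/(k+1)}. Then the Taylor remainder of order k vanishes uniformly on the intervals [N, N + L(N)]: sup_{0 ≤ h ≤ L(N)} | f(N+h) − Σ_{i=0}^{k} f^{(i)}(N) h^i / i! | → 0 as N → +∞. -/

import Mathlib

open Filter MeasureTheory Topology

noncomputable section

/-- `f ≺ g` : `f(t)/g(t) → 0` as `t → +∞`. -/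
def Prec (f g : ℝ → ℝ) : Prop :=
  Filter.Tendsto (fun t => f t / g t) Filter.atTop (nhds 0)

/-- `f ≪ g` : `|f(t)| ≤ C |g(t)|` for some constant `C > 0` and all large `t`. -/
def Dom (f g : ℝ → ℝ) : Prop :=
  ∃ C : ℝ, 0 < C ∧ ∀ᶠ t in Filter.atTop, |f t| ≤ C * |g t|

/-- `f` has polynomial growth: `f(t)/t^k → 0` for some positive integer `k`. -/
def PolyGrowth (f : ℝ → ℝ) : Prop :=
  ∃ k : ℕ, 0 < k ∧ Filter.Tendsto (fun t => f t / t ^ k) Filter.atTop (nhds 0)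

/-- The logarithmico-exponential functions of Hardy: built from constants and the
identity by `+`, `-`, `*`, `/`, `exp`, `log` and composition. -/
inductive IsLE : (ℝ → ℝ) → Prop
  | const (c : ℝ) : IsLE fun _ => c
  | id : IsLE fun t => t
  | add {f g} : IsLE f → IsLE g → IsLE (f + g)
  | sub {f g} : IsLE f → IsLE g → IsLE (f - g)
  | mul {f g} : IsLE f → IsLE g → IsLE (f * g)
  | div {f g} : IsLE f → IsLE g → IsLE (f / g)
  | exp {f} : IsLE f → IsLE fun t => Real.exp (f t)
  | log {f} : IsLE f → IsLE fun t => Real.log (f t)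
  | comp {f g} : IsLE f → IsLE g → IsLE (f ∘ g)

/-- A Hardy field: a collection of (representatives of) germs at `+∞` of real functions,
closed under germ equality, forming a field under pointwise operations, and closed under
differentiation (each element is eventually differentiable, with derivative again in `H`). -/
structure IsHardyField (H : Set (ℝ → ℝ)) : Prop where
  mem_congr : ∀ {f g : ℝ → ℝ}, f ∈ H → f =ᶠ[Filter.atTop] g → g ∈ H
  zero_mem : (fun _ : ℝ => (0 : ℝ)) ∈ H
  one_mem : (fun _ : ℝ => (1 : ℝ)) ∈ H
  add_mem : ∀ {f g : ℝ → ℝ}, f ∈ H → g ∈ H → f + g ∈ H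
  neg_mem : ∀ {f : ℝ → ℝ}, f ∈ H → -f ∈ H
  mul_mem : ∀ {f g : ℝ → ℝ}, f ∈ H → g ∈ H → f * g ∈ H
  inv_mem : ∀ {f : ℝ → ℝ}, f ∈ H → ¬ (f =ᶠ[Filter.atTop] fun _ => (0 : ℝ)) →
    (fun t => (f t)⁻¹) ∈ H
  eventuallyDifferentiable : ∀ {f : ℝ → ℝ}, f ∈ H →
    ∀ᶠ t in Filter.atTop, DifferentiableAt ℝ f t
  deriv_mem : ∀ {f : ℝ → ℝ}, f ∈ H → deriv f ∈ H

/-- `H` contains (the germs of) all logarithmico-exponential functions. -/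
def ContainsLE (H : Set (ℝ → ℝ)) : Prop := ∀ f : ℝ → ℝ, IsLE f → f ∈ H

/-- strongly non-polynomial: `t^k ≺ f ≺ t^{k+1}` for some `k ∈ ℕ`, or `f(t) → 0`. -/
def StronglyNonPoly (f : ℝ → ℝ) : Prop :=
  (∃ k : ℕ, Prec (fun t => t ^ k) f ∧ Prec f fun t => t ^ (k + 1)) ∨
    Filter.Tendsto f Filter.atTop (nhds 0)

/-!
Taylor's theorem with the Lagrange remainder bounds the error on `[N, N + h]` by
`sup |f⁽ᵏ⁺¹⁾| · h^{k+1} / (k+1)!`. In a Hardy field `f⁽ᵏ⁺¹⁾` is eventually monotone, so since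
it tends to `0` its absolute value is eventually nonincreasing, and the supremum over
`[N, N + h]` is `|f⁽ᵏ⁺¹⁾(N)|`. The error is therefore at most
`L(N)^{k+1} |f⁽ᵏ⁺¹⁾(N)| / (k+1)!`, which tends to `0` precisely because
`L ≺ |f⁽ᵏ⁺¹⁾|^{-1/(k+1)}`.
-/

open Set
open scoped Nat

lemma antitoneOn_abs_of_monotoneOn {g : ℝ → ℝ} {a : ℝ} (hg : MonotoneOn g (Ici a))
    (h0 : Tendsto g atTop (𝓝 0)) : AntitoneOn (fun t => |g t|) (Ici a) := by
  have hnonpos : ∀ s ∈ Ici a, g s ≤ 0 := fun s hs =>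
    ge_of_tendsto h0 ((eventually_ge_atTop s).mono fun t hst =>
      hg hs (mem_Ici.mpr (le_trans hs hst)) hst)
  intro s hs t ht hst
  simp only [abs_of_nonpos (hnonpos s hs), abs_of_nonpos (hnonpos t ht), neg_le_neg_iff]
  exact hg hs ht hst

lemma antitoneOn_abs_of_antitoneOn {g : ℝ → ℝ} {a : ℝ} (hg : AntitoneOn g (Ici a))
    (h0 : Tendsto g atTop (𝓝 0)) : AntitoneOn (fun t => |g t|) (Ici a) := by
  simpa only [abs_neg] using antitoneOn_abs_of_monotoneOn hg.neg (by simpa using h0.neg)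

lemma tendsto_pow_mul_abs_of_prec {L g : ℝ → ℝ} {n : ℕ} (hn : n ≠ 0)
    (h : Prec L fun t => |g t| ^ (-(1 : ℝ) / n)) :
    Tendsto (fun t => L t ^ n * |g t|) atTop (𝓝 0) := by
  have hroot : Tendsto (fun t => L t * |g t| ^ ((1 : ℝ) / n)) atTop (𝓝 0) :=
    h.congr fun t => by dsimp only; rw [neg_div, Real.rpow_neg (abs_nonneg _), div_inv_eq_mul]
  have hinv : (1 : ℝ) / n * n = 1 := one_div_mul_cancel (Nat.cast_ne_zero.mpr hn)
  simpa [mul_pow, ← Real.rpow_natCast, ← Real.rpow_mul (abs_nonneg _), hinv, hn] using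
    hroot.pow n

lemma abs_sub_sum_taylor_le {f : ℝ → ℝ} {U : Set ℝ} (hU : IsOpen U) {n : ℕ}
    (hf : ContDiffOn ℝ (n + 1) f U) {x₀ x C : ℝ} (hx : x₀ ≤ x) (hsub : Icc x₀ x ⊆ U)
    (hC : ∀ y ∈ Icc x₀ x, |iteratedDeriv (n + 1) f y| ≤ C) :
    |f x - ∑ i ∈ Finset.range (n + 1), iteratedDeriv i f x₀ * (x - x₀) ^ i / i !| ≤
      C * (x - x₀) ^ (n + 1) / (n + 1)! := by
  rcases hx.eq_or_lt with rfl | hlt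
  · simp [Finset.sum_range_succ']
  have hsub' : uIcc x₀ x ⊆ U := by rwa [uIcc_of_le hx]
  obtain ⟨c, hc, hrem⟩ := taylor_mean_remainder_lagrange_iteratedDeriv hlt.ne (hf.mono hsub')
  have htaylor : taylorWithinEval f n (uIcc x₀ x) x₀ x =
      ∑ i ∈ Finset.range (n + 1), iteratedDeriv i f x₀ * (x - x₀) ^ i / i ! := by
    rw [taylor_within_apply]
    refine Finset.sum_congr rfl fun i hi => ?_
    have hi' : i ≤ n + 1 := (Finset.mem_range_succ_iff.mp hi).trans n.le_succ
    rw [iteratedDerivWithin_eq_iteratedDeriv (uniqueDiffOn_uIcc hlt.ne)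
      ((hf.contDiffAt (hU.mem_nhds (hsub' left_mem_uIcc))).of_le (by exact_mod_cast hi'))
      left_mem_uIcc, smul_eq_mul]
    ring
  rw [uIoo_of_le hx] at hc
  rw [← htaylor, hrem, abs_div, abs_mul, abs_pow, abs_of_nonneg (sub_nonneg.mpr hx), Nat.abs_cast]
  gcongr
  exact hC c (Ioo_subset_Icc_self hc)

namespace IsHardyField

variable {H : Set (ℝ → ℝ)}

lemma iteratedDeriv_mem (hH : IsHardyField H) {f : ℝ → ℝ} (hf : f ∈ H) (n : ℕ) :
    iteratedDeriv n f ∈ H := by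
  induction n with
  | zero => simpa using hf
  | succ n ih => rw [iteratedDeriv_succ]; exact hH.deriv_mem ih

lemma exists_contDiffOn_Ioi (hH : IsHardyField H) (n : ℕ) :
    ∀ {f : ℝ → ℝ}, f ∈ H → ∃ a, ContDiffOn ℝ n f (Ioi a) := by
  induction n with
  | zero =>
    intro f hf
    obtain ⟨a, ha⟩ := eventually_atTop.mp (hH.eventuallyDifferentiable hf)
    exact ⟨a, contDiffOn_zero.mpr fun t ht =>
      (ha t (le_of_lt ht)).continuousAt.continuousWithinAt⟩
  | succ n ih =>
    intro f hf
    obtain ⟨a₁, ha₁⟩ := eventually_atTop.mp (hH.eventuallyDifferentiable hf)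
    obtain ⟨a₂, ha₂⟩ := ih (hH.deriv_mem hf)
    refine ⟨max a₁ a₂, ?_⟩
    rw [Nat.cast_succ, contDiffOn_succ_iff_deriv_of_isOpen isOpen_Ioi]
    exact ⟨fun t ht => (ha₁ t (le_of_max_le_left (le_of_lt ht))).differentiableWithinAt,
      by simp, ha₂.mono (Ioi_subset_Ioi (le_max_right _ _))⟩

lemma eventually_eq_zero_or_ne_zero (hH : IsHardyField H) {g : ℝ → ℝ} (hg : g ∈ H) :
    (∀ᶠ t in atTop, g t = 0) ∨ ∀ᶠ t in atTop, g t ≠ 0 := by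
  by_cases hz : g =ᶠ[atTop] fun _ => 0
  · exact Or.inl hz
  -- `g * g⁻¹` is the indicator of `{g ≠ 0}`; continuous on a half-line, it is constant there.
  set e : ℝ → ℝ := g * fun t => (g t)⁻¹
  obtain ⟨a, ha⟩ := eventually_atTop.mp
    (hH.eventuallyDifferentiable (hH.mul_mem hg (hH.inv_mem hg hz)))
  have he : ∀ s ∈ Ici a, ∀ t ∈ Ici a, e s = e t := fun s hs t ht =>
    isPreconnected_Ici.constant_of_mapsTo (T := {0, 1}) (toFinite _).isDiscrete
      (fun x hx => (ha x hx).continuousAt.continuousWithinAt)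
      (fun x _ => by by_cases h : g x = 0 <;> simp [h]) hs ht
  refine Or.inr ((eventually_ge_atTop a).mono fun t ht hgt =>
    hz (eventually_atTop.mpr ⟨a, fun s hs => ?_⟩))
  by_contra hgs
  simpa [e, hgs, hgt] using he s hs t ht

lemma eventually_nonneg_or_nonpos (hH : IsHardyField H) {g : ℝ → ℝ} (hg : g ∈ H) :
    (∀ᶠ t in atTop, 0 ≤ g t) ∨ ∀ᶠ t in atTop, g t ≤ 0 := by
  rcases hH.eventually_eq_zero_or_ne_zero hg with hz | hnz
  · exact Or.inl (hz.mono fun t ht => ht.ge)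
  obtain ⟨a, ha⟩ := eventually_atTop.mp (hnz.and (hH.eventuallyDifferentiable hg))
  by_contra hsign
  simp only [not_or, not_eventually, not_le] at hsign
  obtain ⟨s, hgs, hs⟩ := (hsign.1.and_eventually (eventually_ge_atTop a)).exists
  obtain ⟨t, hgt, ht⟩ := (hsign.2.and_eventually (eventually_ge_atTop a)).exists
  obtain ⟨c, hc, hgc⟩ := isPreconnected_Ici.intermediate_value (mem_Ici.mpr hs) (mem_Ici.mpr ht)
    (fun x hx => (ha x hx).2.continuousAt.continuousWithinAt) ⟨hgs.le, hgt.le⟩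
  exact (ha c hc).1 hgc

lemma exists_monotoneOn_or_antitoneOn (hH : IsHardyField H) {g : ℝ → ℝ} (hg : g ∈ H) :
    ∃ a, MonotoneOn g (Ici a) ∨ AntitoneOn g (Ici a) := by
  have hreg : ∀ᶠ a in atTop,
      ContinuousOn g (Ici a) ∧ DifferentiableOn ℝ g (interior (Ici a)) := by
    obtain ⟨a₁, ha₁⟩ := eventually_atTop.mp (hH.eventuallyDifferentiable hg)
    filter_upwards [eventually_ge_atTop a₁] with a ha
    exact ⟨fun t ht => (ha₁ t (ha.trans ht)).continuousAt.continuousWithinAt,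
      fun t ht => (ha₁ t (ha.trans (interior_subset ht : t ∈ Ici a))).differentiableWithinAt⟩
  rcases hH.eventually_nonneg_or_nonpos (hH.deriv_mem hg) with h | h
  · obtain ⟨a, ⟨hc, hd⟩, ha⟩ := (hreg.and (eventually_forall_ge_atTop.mpr h)).exists
    exact ⟨a, Or.inl (monotoneOn_of_deriv_nonneg (convex_Ici a) hc hd fun t ht =>
      ha t (interior_subset ht))⟩
  · obtain ⟨a, ⟨hc, hd⟩, ha⟩ := (hreg.and (eventually_forall_ge_atTop.mpr h)).exists
    exact ⟨a, Or.inr (antitoneOn_of_deriv_nonpos (convex_Ici a) hc hd fun t ht =>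
      ha t (interior_subset ht))⟩

lemma exists_antitoneOn_abs (hH : IsHardyField H) {g : ℝ → ℝ} (hg : g ∈ H)
    (h0 : Tendsto g atTop (𝓝 0)) : ∃ a, AntitoneOn (fun t => |g t|) (Ici a) := by
  obtain ⟨a, hmono | hanti⟩ := hH.exists_monotoneOn_or_antitoneOn hg
  · exact ⟨a, antitoneOn_abs_of_monotoneOn hmono h0⟩
  · exact ⟨a, antitoneOn_abs_of_antitoneOn hanti h0⟩

end IsHardyField

theorem stmt_13_general (H : Set (ℝ → ℝ)) (hH : IsHardyField H)
    (f : ℝ → ℝ) (hf : f ∈ H)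
    (k : ℕ)
    (hk' : Filter.Tendsto (iteratedDeriv (k + 1) f) Filter.atTop (nhds 0))
    (L : ℝ → ℝ)
    (hL2 : Prec L fun t => |iteratedDeriv (k + 1) f t| ^ (-(1 : ℝ) / (k + 1))) :
    ∀ ε : ℝ, 0 < ε → ∀ᶠ N : ℝ in Filter.atTop, ∀ h ∈ Set.Icc (0 : ℝ) (L N),
      |f (N + h) - ∑ i ∈ Finset.range (k + 1),
        iteratedDeriv i f N * h ^ i / (Nat.factorial i)| < ε := by
  intro ε hε
  obtain ⟨a₁, hsmooth⟩ := hH.exists_contDiffOn_Ioi (k + 1) hf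
  obtain ⟨a₂, hanti⟩ := hH.exists_antitoneOn_abs (hH.iteratedDeriv_mem hf (k + 1)) hk'
  have hsmall : ∀ᶠ N in atTop, L N ^ (k + 1) * |iteratedDeriv (k + 1) f N| / (k + 1)! < ε := by
    have hlim := (tendsto_pow_mul_abs_of_prec k.succ_ne_zero (by exact_mod_cast hL2)).div_const
      ((k + 1)! : ℝ)
    exact hlim.eventually (gt_mem_nhds (by simpa using hε))
  filter_upwards [eventually_gt_atTop a₁, eventually_ge_atTop a₂, hsmall]
    with N hN₁ hN₂ hN h ⟨hh0, hhL⟩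
  have hbound := abs_sub_sum_taylor_le isOpen_Ioi (by exact_mod_cast hsmooth)
    (le_add_of_nonneg_right hh0) (fun y hy => hN₁.trans_le hy.1)
    (C := |iteratedDeriv (k + 1) f N|) fun y hy => hanti hN₂ (hN₂.trans hy.1) hy.1
  rw [add_sub_cancel_left] at hbound
  calc _ ≤ _ := hbound
    _ ≤ L N ^ (k + 1) * |iteratedDeriv (k + 1) f N| / (k + 1)! := by rw [mul_comm]; gcongr
    _ < ε := hN

/-- Taylor remainder of order `k` of `f` vanishes uniformly on the
intervals `[N, N + L(N)]`, for `L` between `|f⁽ᵏ⁾|^{-1/k}` and `|f⁽ᵏ⁺¹⁾|^{-1/(k+1)}`. -/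
theorem stmt_13 (H : Set (ℝ → ℝ)) (hH : IsHardyField H) (hLE : ContainsLE H)
    (f : ℝ → ℝ) (hf : f ∈ H) (hsnp : StronglyNonPoly f) (hlog : Prec Real.log f)
    (k : ℕ) (hk : 0 < k)
    (hk' : Filter.Tendsto (iteratedDeriv (k + 1) f) Filter.atTop (nhds 0))
    (L : ℝ → ℝ) (hLpos : ∀ t, 0 < L t)
    (hL1 : Prec (fun t => |iteratedDeriv k f t| ^ (-(1 : ℝ) / k)) L)
    (hL2 : Prec L fun t => |iteratedDeriv (k + 1) f t| ^ (-(1 : ℝ) / (k + 1))) :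
    ∀ ε : ℝ, 0 < ε → ∀ᶠ N : ℝ in Filter.atTop, ∀ h ∈ Set.Icc (0 : ℝ) (L N),
      |f (N + h) - ∑ i ∈ Finset.range (k + 1),
        iteratedDeriv i f N * h ^ i / (Nat.factorial i)| < ε :=
  stmt_13_general H hH f hf k hk' L hL2
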